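/- arXiv:2212.01872 — 4 statements merged into one kernel-verified Lean document; each statement's English description precedes it below -/
import Mathlib

section
/- Isoperimetric inequality for 1-forms over loops in a convex set (key case of Lemma 4.1): Let E be a finite-dimensional real inner product space, let B ⊆ E be a convex set, and let λ : E → E →L[ℝ] ℝ be a continuously differentiable map (a smooth 1-form on E). Let K ≥ 0 be such that for every x ∈ B and all u, v ∈ E one has |(Dλ(x) u)(v) − (Dλ(x) v)(u)| ≤ K‖u‖‖v‖, where Dλ(x) denotes the Fréchet derivative of λ at x. Then for every continuously differentiable loop γ : [0,1] → E with γ(0) = γ(1) and image contained in B, one has |∫₀¹ λ(γ(t))(γ′(t)) dt| ≤ (K/2)·(∫₀¹ ‖γ′(t)‖ dt)². -/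
open MeasureTheory intervalIntegral Set Metric

namespace IsoAux

variable {E : Type*} [NormedAddCommGroup E] [NormedSpace ℝ E]

/-- The cone map `a(s,t) = γ 0 + s • (γ t - γ 0)`. -/
noncomputable def A (γ : ℝ → E) (s t : ℝ) : E := γ 0 + s • (γ t - γ 0)

noncomputable def g (lam : E → E →L[ℝ] ℝ) (γ : ℝ → E) (s t : ℝ) : ℝ :=
  lam (A γ s t) (s • deriv γ t)

noncomputable def G (lam : E → E →L[ℝ] ℝ) (γ : ℝ → E) (s t : ℝ) : ℝ :=
  fderiv ℝ lam (A γ s t) (γ t - γ 0) (s • deriv γ t) + lam (A γ s t) (deriv γ t)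

noncomputable def Hf (lam : E → E →L[ℝ] ℝ) (γ : ℝ → E) (s t : ℝ) : ℝ :=
  lam (A γ s t) (γ t - γ 0)

noncomputable def Ht (lam : E → E →L[ℝ] ℝ) (γ : ℝ → E) (s t : ℝ) : ℝ :=
  fderiv ℝ lam (A γ s t) (s • deriv γ t) (γ t - γ 0) + lam (A γ s t) (deriv γ t)

variable {lam : E → E →L[ℝ] ℝ} {γ : ℝ → E}

lemma contA (hγ : ContDiff ℝ 1 γ) : Continuous fun p : ℝ × ℝ => A γ p.1 p.2 := by
  have := hγ.continuous
  unfold A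
  continuity

lemma hasDerivAt_A_s (hγ : ContDiff ℝ 1 γ) (s t : ℝ) :
    HasDerivAt (fun x => A γ x t) (γ t - γ 0) s := by
  have h : HasDerivAt (fun x : ℝ => x • (γ t - γ 0)) ((1:ℝ) • (γ t - γ 0)) s :=
    (hasDerivAt_id s).smul_const _
  simpa [A, one_smul] using h.const_add (γ 0)

lemma hasDerivAt_A_t (hγ : ContDiff ℝ 1 γ) (s t : ℝ) :
    HasDerivAt (fun x => A γ s x) (s • deriv γ t) t := by
  have hd : HasDerivAt γ (deriv γ t) t :=
    ((hγ.differentiable one_ne_zero) t).hasDerivAt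
  have h : HasDerivAt (fun x : ℝ => s • (γ x - γ 0)) (s • deriv γ t) t :=
    ((hd.sub_const _)).const_smul s
  simpa [A] using h.const_add (γ 0)

lemma hasDerivAt_g_s (hlam : ContDiff ℝ 1 lam) (hγ : ContDiff ℝ 1 γ) (s t : ℝ) :
    HasDerivAt (fun x => g lam γ x t) (G lam γ s t) s := by
  have hc : HasDerivAt (fun x => lam (A γ x t)) (fderiv ℝ lam (A γ s t) (γ t - γ 0)) s :=
    (((hlam.differentiable one_ne_zero) (A γ s t)).hasFDerivAt).comp_hasDerivAt s
      (hasDerivAt_A_s hγ s t)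
  have hu : HasDerivAt (fun x : ℝ => x • deriv γ t) ((1:ℝ) • deriv γ t) s :=
    (hasDerivAt_id s).smul_const _
  simpa [g, G, one_smul] using hc.clm_apply hu

lemma hasDerivAt_Hf_t (hlam : ContDiff ℝ 1 lam) (hγ : ContDiff ℝ 1 γ) (s t : ℝ) :
    HasDerivAt (fun x => Hf lam γ s x) (Ht lam γ s t) t := by
  have hd : HasDerivAt γ (deriv γ t) t :=
    ((hγ.differentiable one_ne_zero) t).hasDerivAt
  have hc : HasDerivAt (fun x => lam (A γ s x)) (fderiv ℝ lam (A γ s t) (s • deriv γ t)) t :=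
    (((hlam.differentiable one_ne_zero) (A γ s t)).hasFDerivAt).comp_hasDerivAt t
      (hasDerivAt_A_t hγ s t)
  have hu : HasDerivAt (fun x : ℝ => γ x - γ 0) (deriv γ t) t := hd.sub_const _
  simpa [Hf, Ht] using hc.clm_apply hu

lemma contG (hlam : ContDiff ℝ 1 lam) (hγ : ContDiff ℝ 1 γ) :
    Continuous fun p : ℝ × ℝ => G lam γ p.1 p.2 := by
  have h1 : Continuous (fderiv ℝ lam) := hlam.continuous_fderiv one_ne_zero
  have h2 : Continuous (deriv γ) := hγ.continuous_deriv le_rfl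
  have hA : Continuous fun p : ℝ × ℝ => A γ p.1 p.2 := contA hγ
  have hγc : Continuous γ := hγ.continuous
  exact (((h1.comp hA).clm_apply ((hγc.comp continuous_snd).sub continuous_const)).clm_apply
      (continuous_fst.smul (h2.comp continuous_snd))).add
    ((hlam.continuous.comp hA).clm_apply (h2.comp continuous_snd))

lemma contHt (hlam : ContDiff ℝ 1 lam) (hγ : ContDiff ℝ 1 γ) :
    Continuous fun p : ℝ × ℝ => Ht lam γ p.1 p.2 := by
  have h1 : Continuous (fderiv ℝ lam) := hlam.continuous_fderiv one_ne_zero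
  have h2 : Continuous (deriv γ) := hγ.continuous_deriv le_rfl
  have hA : Continuous fun p : ℝ × ℝ => A γ p.1 p.2 := contA hγ
  have hγc : Continuous γ := hγ.continuous
  exact (((h1.comp hA).clm_apply (continuous_fst.smul (h2.comp continuous_snd))).clm_apply
      ((hγc.comp continuous_snd).sub continuous_const)).add
    ((hlam.continuous.comp hA).clm_apply (h2.comp continuous_snd))

end IsoAux

/-- **Isoperimetric inequality for 1-forms over loops in a convex set**
(key case of Lemma 4.1 of the paper). If `lam` is a `C¹` 1-form on a
finite-dimensional real inner product space `E`, whose exterior derivative is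
bounded by `K` on a convex set `B`, then the integral of `lam` over any `C¹`
loop contained in `B` is bounded by `K/2` times the square of the length of
the loop. -/
theorem isoperimetric_inequality_one_form
    {E : Type*} [NormedAddCommGroup E] [InnerProductSpace ℝ E] [FiniteDimensional ℝ E]
    (B : Set E) (hB : Convex ℝ B)
    (lam : E → E →L[ℝ] ℝ) (hlam : ContDiff ℝ 1 lam)
    (K : ℝ) (hK : 0 ≤ K)
    (hbound : ∀ x ∈ B, ∀ u v : E,
      |fderiv ℝ lam x u v - fderiv ℝ lam x v u| ≤ K * ‖u‖ * ‖v‖)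
    (γ : ℝ → E) (hγ : ContDiff ℝ 1 γ) (hloop : γ 0 = γ 1)
    (hmem : ∀ t ∈ Set.Icc (0 : ℝ) 1, γ t ∈ B) :
    |∫ t in (0 : ℝ)..1, lam (γ t) (deriv γ t)|
      ≤ K / 2 * (∫ t in (0 : ℝ)..1, ‖deriv γ t‖) ^ 2 := by
  classical
  set ℓ : ℝ := ∫ t in (0 : ℝ)..1, ‖deriv γ t‖ with hℓdef
  have hγ' : Continuous (deriv γ) := hγ.continuous_deriv le_rfl
  have hγc : Continuous γ := hγ.continuous
  have hd : ∀ t, HasDerivAt γ (deriv γ t) t := fun t =>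
    ((hγ.differentiable one_ne_zero) t).hasDerivAt
  have hℓ0 : 0 ≤ ℓ :=
    intervalIntegral.integral_nonneg zero_le_one (fun t _ => norm_nonneg _)
  -- every chord length is bounded by the total length
  have hsub : ∀ t ∈ Icc (0:ℝ) 1, ‖γ t - γ 0‖ ≤ ℓ := by
    intro t ht
    have hftc : (∫ u in (0:ℝ)..t, deriv γ u) = γ t - γ 0 :=
      intervalIntegral.integral_eq_sub_of_hasDerivAt (fun u _ => hd u)
        (hγ'.intervalIntegrable _ _)
    have h1 : ‖∫ u in (0:ℝ)..t, deriv γ u‖ ≤ ∫ u in (0:ℝ)..t, ‖deriv γ u‖ :=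
      intervalIntegral.norm_integral_le_integral_norm ht.1
    have h2 : (∫ u in (0:ℝ)..t, ‖deriv γ u‖) ≤ ℓ := by
      have hadd : (∫ u in (0:ℝ)..t, ‖deriv γ u‖) + (∫ u in t..1, ‖deriv γ u‖) = ℓ :=
        intervalIntegral.integral_add_adjacent_intervals
          ((hγ'.norm).intervalIntegrable _ _) ((hγ'.norm).intervalIntegrable _ _)
      have hnn : 0 ≤ ∫ u in t..1, ‖deriv γ u‖ :=
        intervalIntegral.integral_nonneg ht.2 (fun u _ => norm_nonneg _)
      linarith
    rw [← hftc]
    exact h1.trans h2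
  -- the cone stays in `B`
  have hmemA : ∀ s ∈ Icc (0:ℝ) 1, ∀ t ∈ Icc (0:ℝ) 1, IsoAux.A γ s t ∈ B := by
    intro s hs t ht
    have : IsoAux.A γ s t = (1 - s) • γ 0 + s • γ t := by
      unfold IsoAux.A; module
    rw [this]
    exact hB (hmem 0 (by norm_num)) (hmem t ht) (by linarith [hs.2]) hs.1 (by ring)
  -- continuity of `g`
  have contg : Continuous fun p : ℝ × ℝ => IsoAux.g lam γ p.1 p.2 := by
    have hA := IsoAux.contA (γ := γ) hγ
    exact (hlam.continuous.comp hA).clm_apply (continuous_fst.smul (hγ'.comp continuous_snd))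
  have contG := IsoAux.contG (lam := lam) (γ := γ) hlam hγ
  have contHt := IsoAux.contHt (lam := lam) (γ := γ) hlam hγ
  -- the deformation integral and its derivative
  set F : ℝ → ℝ := fun s => ∫ t in (0:ℝ)..1, IsoAux.g lam γ s t with hFdef
  have hF' : ∀ s : ℝ, HasDerivAt F (∫ t in (0:ℝ)..1, IsoAux.G lam γ s t) s := by
    intro s
    obtain ⟨C, hC⟩ : ∃ C, ∀ p ∈ (Icc (s - 1) (s + 1) ×ˢ Icc (0:ℝ) 1),
        ‖IsoAux.G lam γ p.1 p.2‖ ≤ C :=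
      (isCompact_Icc.prod isCompact_Icc).exists_bound_of_continuousOn
        contG.continuousOn
    refine (intervalIntegral.hasDerivAt_integral_of_dominated_loc_of_deriv_le
      (F := fun x t => IsoAux.g lam γ x t) (F' := fun x t => IsoAux.G lam γ x t)
      (bound := fun _ => C) (s := Metric.ball s 1) (Metric.ball_mem_nhds s zero_lt_one) ?_ ?_ ?_ ?_ ?_ ?_).2
    · exact Filter.Eventually.of_forall fun x =>
        (contg.comp (continuous_const.prodMk continuous_id)).aestronglyMeasurable
    · exact ((contg.comp (continuous_const.prodMk continuous_id))).intervalIntegrable _ _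
    · exact (contG.comp (continuous_const.prodMk continuous_id)).aestronglyMeasurable
    · refine Filter.Eventually.of_forall fun t ht x hx => ?_
      refine hC (x, t) ⟨?_, ?_⟩
      · rw [mem_ball, Real.dist_eq] at hx
        have := abs_lt.1 hx
        exact ⟨by linarith, by linarith⟩
      · have := Set.uIoc_of_le (zero_le_one (α := ℝ)) ▸ ht
        rw [Set.uIoc_of_le (zero_le_one (α := ℝ))] at ht
        exact ⟨le_of_lt ht.1, ht.2⟩
    · exact intervalIntegrable_const
    · exact Filter.Eventually.of_forall fun t _ x _ => IsoAux.hasDerivAt_g_s hlam hγ x t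
  -- the `t`-boundary term vanishes
  have hHzero : ∀ s : ℝ, (∫ t in (0:ℝ)..1, IsoAux.Ht lam γ s t) = 0 := by
    intro s
    have hftc : (∫ t in (0:ℝ)..1, IsoAux.Ht lam γ s t)
        = IsoAux.Hf lam γ s 1 - IsoAux.Hf lam γ s 0 :=
      intervalIntegral.integral_eq_sub_of_hasDerivAt
        (fun t _ => IsoAux.hasDerivAt_Hf_t hlam hγ s t)
        ((contHt.comp (continuous_const.prodMk continuous_id)).intervalIntegrable _ _)
    have h10 : γ 1 - γ 0 = 0 := by rw [← hloop, sub_self]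
    rw [hftc]
    simp [IsoAux.Hf, h10]
  -- bound on the derivative of `F`
  have hF'bound : ∀ s ∈ Icc (0:ℝ) 1,
      ‖∫ t in (0:ℝ)..1, IsoAux.G lam γ s t‖ ≤ K * ℓ ^ 2 * s := by
    intro s hs
    have hGint : IntervalIntegrable (fun t => IsoAux.G lam γ s t) volume 0 1 :=
      (contG.comp (continuous_const.prodMk continuous_id)).intervalIntegrable _ _
    have hHint : IntervalIntegrable (fun t => IsoAux.Ht lam γ s t) volume 0 1 :=
      (contHt.comp (continuous_const.prodMk continuous_id)).intervalIntegrable _ _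
    have hsplit : (∫ t in (0:ℝ)..1, IsoAux.G lam γ s t)
        = ∫ t in (0:ℝ)..1, (IsoAux.G lam γ s t - IsoAux.Ht lam γ s t) := by
      rw [intervalIntegral.integral_sub hGint hHint, hHzero s, sub_zero]
    rw [hsplit]
    have hptwise : ∀ t ∈ Icc (0:ℝ) 1,
        |IsoAux.G lam γ s t - IsoAux.Ht lam γ s t| ≤ K * ℓ * s * ‖deriv γ t‖ := by
      intro t ht
      have hmem' := hmemA s hs t ht
      have hb := hbound _ hmem' (γ t - γ 0) (s • deriv γ t)
      have heq : IsoAux.G lam γ s t - IsoAux.Ht lam γ s t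
          = fderiv ℝ lam (IsoAux.A γ s t) (γ t - γ 0) (s • deriv γ t)
            - fderiv ℝ lam (IsoAux.A γ s t) (s • deriv γ t) (γ t - γ 0) := by
        unfold IsoAux.G IsoAux.Ht; ring
      rw [heq]
      refine hb.trans ?_
      rw [norm_smul, Real.norm_eq_abs, abs_of_nonneg hs.1]
      calc K * ‖γ t - γ 0‖ * (s * ‖deriv γ t‖)
          ≤ K * ℓ * (s * ‖deriv γ t‖) := by
            apply mul_le_mul_of_nonneg_right
              (mul_le_mul_of_nonneg_left (hsub t ht) hK)
            exact mul_nonneg hs.1 (norm_nonneg _)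
        _ = K * ℓ * s * ‖deriv γ t‖ := by ring
    calc ‖∫ t in (0:ℝ)..1, (IsoAux.G lam γ s t - IsoAux.Ht lam γ s t)‖
        ≤ ∫ t in (0:ℝ)..1, ‖IsoAux.G lam γ s t - IsoAux.Ht lam γ s t‖ :=
          intervalIntegral.norm_integral_le_integral_norm zero_le_one
      _ ≤ ∫ t in (0:ℝ)..1, K * ℓ * s * ‖deriv γ t‖ := by
          apply intervalIntegral.integral_mono_on zero_le_one
            ((hGint.sub hHint).norm)
            ((continuous_const.mul hγ'.norm).intervalIntegrable _ _)
          intro t ht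
          simpa [Real.norm_eq_abs] using hptwise t ht
      _ = K * ℓ * s * ℓ := by
          rw [intervalIntegral.integral_const_mul]
      _ = K * ℓ ^ 2 * s := by ring
  -- fencing argument
  have hF0 : F 0 = 0 := by
    simp [hFdef, IsoAux.g]
  have hmain : ∀ x ∈ Icc (0:ℝ) 1, ‖F x‖ ≤ K / 2 * ℓ ^ 2 * x ^ 2 := by
    refine image_norm_le_of_norm_deriv_right_le_deriv_boundary
      (f' := fun s => ∫ t in (0:ℝ)..1, IsoAux.G lam γ s t)
      (B := fun x => K / 2 * ℓ ^ 2 * x ^ 2) (B' := fun x => K * ℓ ^ 2 * x)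
      ?_ ?_ ?_ ?_ ?_
    · exact fun x _ => ((hF' x).continuousAt.continuousWithinAt)
    · exact fun x _ => (hF' x).hasDerivWithinAt
    · simp [hF0]
    · intro x
      have h := (hasDerivAt_pow 2 x).const_mul (K / 2 * ℓ ^ 2)
      refine h.congr_deriv ?_
      ring
    · intro x hx
      exact hF'bound x ⟨hx.1, le_of_lt hx.2⟩
  have hF1 : F 1 = ∫ t in (0:ℝ)..1, lam (γ t) (deriv γ t) := by
    apply intervalIntegral.integral_congr
    intro t _
    simp [IsoAux.g, IsoAux.A]
  have := hmain 1 ⟨zero_le_one, le_rfl⟩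
  rw [hF1] at this
  calc |∫ t in (0:ℝ)..1, lam (γ t) (deriv γ t)|
      ≤ K / 2 * ℓ ^ 2 * 1 ^ 2 := this
    _ = K / 2 * ℓ ^ 2 := by ring
end

section
/- Euclidean version of Lemma 4.2: Let E be a finite-dimensional real inner product space, let K ⊆ E be compact, and let X : E → E be continuous with X(x) ≠ 0 for every x ∈ K. Then there exists ε₀ > 0 such that for every ε ∈ (0, ε₀] and every continuously differentiable loop γ : [0,1] → E with γ(0) = γ(1) and image contained in K, one has ∫₀¹ ‖γ′(t)‖² dt ≤ 5 ∫₀¹ ‖γ′(t) − ε X(γ(t))‖² dt. -/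
open MeasureTheory intervalIntegral
open scoped RealInnerProductSpace

set_option maxHeartbeats 1600000 in
/-- **Euclidean version of Lemma 4.2.** If `X` is a continuous vector field on a
finite-dimensional real inner product space `E` that does not vanish on a compact
set `K`, then there is `ε₀ > 0` so that for all `ε ∈ (0, ε₀]` and all `C¹` loops
`γ` contained in `K`, the energy of `γ` is at most `5` times the `L²`-distance
squared of `γ'` from `ε X ∘ γ`. -/
theorem energy_bound_by_drift_distance
    {E : Type*} [NormedAddCommGroup E] [InnerProductSpace ℝ E] [FiniteDimensional ℝ E]
    (K : Set E) (hK : IsCompact K)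
    (X : E → E) (hX : Continuous X) (hX0 : ∀ x ∈ K, X x ≠ 0) :
    ∃ ε₀ > (0 : ℝ), ∀ ε : ℝ, 0 < ε → ε ≤ ε₀ →
      ∀ γ : ℝ → E, ContDiff ℝ 1 γ → γ 0 = γ 1 →
        (∀ t ∈ Set.Icc (0 : ℝ) 1, γ t ∈ K) →
        (∫ t in (0 : ℝ)..1, ‖deriv γ t‖ ^ 2)
          ≤ 5 * ∫ t in (0 : ℝ)..1, ‖deriv γ t - ε • X (γ t)‖ ^ 2 := by
  rcases K.eq_empty_or_nonempty with hKe | hKne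
  · refine ⟨1, one_pos, fun ε hε hε' γ hγ hloop hmem => ?_⟩
    exact absurd (hmem 0 (by norm_num)) (by simp [hKe])
  obtain ⟨xm, hxm, hmin⟩ := hK.exists_isMinOn hKne hX.norm.continuousOn
  obtain ⟨xM, hxM, hmax⟩ := hK.exists_isMaxOn hKne hX.norm.continuousOn
  set m := ‖X xm‖ with hm
  set M := ‖X xM‖ with hM
  have hm0 : 0 < m := norm_pos_iff.mpr (hX0 xm hxm)
  have hmM : m ≤ M := hmax hxm
  have hM0 : 0 < M := hm0.trans_le hmM
  have huc := hK.uniformContinuousOn_of_continuous hX.continuousOn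
  rw [Metric.uniformContinuousOn_iff_le] at huc
  obtain ⟨δ, hδ0, hδ⟩ := huc (m / 2) (by positivity)
  refine ⟨δ / (2 * M), by positivity, ?_⟩
  intro ε hε hεle γ hγ hloop hmem
  set f := deriv γ with hf
  have hfc : Continuous f := hγ.continuous_deriv le_rfl
  have hγc : Continuous γ := hγ.continuous
  have hgc : Continuous fun t => ε • X (γ t) := (hX.comp hγc).const_smul ε
  set A := ∫ t in (0:ℝ)..1, ‖f t‖ ^ 2 with hA
  set B := ∫ t in (0:ℝ)..1, ‖f t - ε • X (γ t)‖ ^ 2 with hB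
  have int1 : IntervalIntegrable (fun t => ‖f t‖ ^ 2) volume 0 1 :=
    (hfc.norm.pow 2).intervalIntegrable 0 1
  have int2 : IntervalIntegrable (fun t => ‖f t - ε • X (γ t)‖ ^ 2) volume 0 1 :=
    ((hfc.sub hgc).norm.pow 2).intervalIntegrable 0 1
  have hB0 : 0 ≤ B :=
    intervalIntegral.integral_nonneg (by norm_num) (fun t _ => by positivity)
  have hεM : ε * M ≤ δ / 2 := by
    have h' : ε * (2 * M) ≤ δ := (le_div_iff₀ (by positivity)).mp hεle
    nlinarith
  by_cases hcase : δ ^ 2 < A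
  · -- Case 1 : the loop is long
    have key : A ≤ 2 * B + 2 * (ε * M) ^ 2 := by
      have h1 : A ≤ ∫ t in (0:ℝ)..1, (2 * ‖f t - ε • X (γ t)‖ ^ 2 + 2 * (ε * M) ^ 2) := by
        apply intervalIntegral.integral_mono_on (by norm_num) int1
          ((int2.const_mul 2).add intervalIntegrable_const)
        intro t ht
        have hXt : ‖X (γ t)‖ ≤ M := hmax (hmem t ht)
        have htr : ‖f t‖ ≤ ‖f t - ε • X (γ t)‖ + ‖ε • X (γ t)‖ := by
          simpa using norm_add_le (f t - ε • X (γ t)) (ε • X (γ t))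
        have h2 : ‖ε • X (γ t)‖ ≤ ε * M := by
          rw [norm_smul, Real.norm_eq_abs, abs_of_pos hε]
          exact mul_le_mul_of_nonneg_left hXt hε.le
        have ha2 : ‖f t‖ ^ 2 ≤ (‖f t - ε • X (γ t)‖ + ‖ε • X (γ t)‖) ^ 2 :=
          pow_le_pow_left₀ (norm_nonneg _) htr 2
        nlinarith [sq_nonneg (‖f t - ε • X (γ t)‖ - ‖ε • X (γ t)‖),
          mul_le_mul h2 h2 (norm_nonneg _) (by positivity : (0:ℝ) ≤ ε * M),
          norm_nonneg (f t), norm_nonneg (f t - ε • X (γ t)), norm_nonneg (ε • X (γ t))]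
      rwa [intervalIntegral.integral_add (int2.const_mul 2) intervalIntegrable_const,
        intervalIntegral.integral_const_mul, intervalIntegral.integral_const, smul_eq_mul,
        sub_zero, one_mul] at h1
    nlinarith [mul_le_mul hεM hεM (by positivity : (0:ℝ) ≤ ε * M)
      (by positivity : (0:ℝ) ≤ δ / 2)]
  · -- Case 2 : the loop is short
    push_neg at hcase
    have hsmall : ∀ t ∈ Set.Icc (0:ℝ) 1, ‖γ t - γ 0‖ ≤ δ := by
      intro t ht
      have hftc : γ t - γ 0 = ∫ s in (0:ℝ)..t, f s :=
        (intervalIntegral.integral_deriv_eq_sub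
          (fun x _ => (hγ.differentiable one_ne_zero).differentiableAt)
          (hfc.intervalIntegrable 0 t)).symm
      rw [hftc]
      have c1 : ‖∫ s in (0:ℝ)..t, f s‖ ≤ ∫ s in (0:ℝ)..t, ‖f s‖ :=
        intervalIntegral.norm_integral_le_integral_norm ht.1
      have c2 : (∫ s in (0:ℝ)..t, ‖f s‖) ≤ ∫ s in (0:ℝ)..1, ‖f s‖ := by
        apply intervalIntegral.integral_mono_interval le_rfl ht.1 ht.2
        · filter_upwards with s using norm_nonneg _
        · exact hfc.norm.intervalIntegrable 0 1
      have c3 : (∫ s in (0:ℝ)..1, ‖f s‖) ≤ ∫ s in (0:ℝ)..1, (δ / 2 + ‖f s‖ ^ 2 / (2 * δ)) := by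
        apply intervalIntegral.integral_mono_on (by norm_num)
          (hfc.norm.intervalIntegrable 0 1)
          (intervalIntegrable_const.add (int1.div_const _))
        intro s _
        rw [← sub_nonneg]
        have hid : δ / 2 + ‖f s‖ ^ 2 / (2 * δ) - ‖f s‖ = (δ - ‖f s‖) ^ 2 / (2 * δ) := by
          field_simp; ring
        rw [hid]; positivity
      have c4 : (∫ s in (0:ℝ)..1, (δ / 2 + ‖f s‖ ^ 2 / (2 * δ))) = δ / 2 + A / (2 * δ) := by
        rw [intervalIntegral.integral_add intervalIntegrable_const (int1.div_const _),
          intervalIntegral.integral_div, intervalIntegral.integral_const]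
        norm_num
        rfl
      have c5 : δ / 2 + A / (2 * δ) ≤ δ := by
        rw [div_add_div _ _ (two_ne_zero) (by positivity : (2:ℝ) * δ ≠ 0), div_le_iff₀ (by positivity)]
        nlinarith
      linarith
    set v := X (γ 0) with hv
    have hvm : m ≤ ‖v‖ := hmin (hmem 0 (by norm_num))
    have hhb : ∀ t ∈ Set.Icc (0:ℝ) 1, ‖X (γ t) - v‖ ≤ m / 2 := by
      intro t ht
      have := hδ (γ t) (hmem t ht) (γ 0) (hmem 0 (by norm_num))
        (by rw [dist_eq_norm]; exact hsmall t ht)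
      rwa [dist_eq_norm] at this
    -- pointwise key inequality
    have ptwise : ∀ t ∈ Set.Icc (0:ℝ) 1,
        ‖f t - ε • v‖ ^ 2 - (5/16) * ε ^ 2 * m ^ 2 ≤ 5 * ‖f t - ε • X (γ t)‖ ^ 2 := by
      intro t ht
      have hhm : ‖X (γ t) - v‖ ≤ m / 2 := hhb t ht
      have hcs : ⟪f t - ε • v, X (γ t) - v⟫ ≤ ‖f t - ε • v‖ * ‖X (γ t) - v‖ :=
        real_inner_le_norm _ _
      have hrw : f t - ε • X (γ t) = (f t - ε • v) - ε • (X (γ t) - v) := by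
        rw [smul_sub]; abel
      have hexp : ‖(f t - ε • v) - ε • (X (γ t) - v)‖ ^ 2
          = ‖f t - ε • v‖ ^ 2 - 2 * (ε * ⟪f t - ε • v, X (γ t) - v⟫)
            + (ε * ‖X (γ t) - v‖) ^ 2 := by
        rw [norm_sub_sq_real, real_inner_smul_right, norm_smul, Real.norm_eq_abs,
          abs_of_pos hε]
      rw [hrw, hexp]
      have e1 : ε * ⟪f t - ε • v, X (γ t) - v⟫
          ≤ ε * (‖f t - ε • v‖ * ‖X (γ t) - v‖) := mul_le_mul_of_nonneg_left hcs hε.le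
      have e2 : 10 * (ε * (‖f t - ε • v‖ * ‖X (γ t) - v‖))
          ≤ 4 * ‖f t - ε • v‖ ^ 2 + 25/4 * (ε * ‖X (γ t) - v‖) ^ 2 := by
        nlinarith [sq_nonneg (2 * ‖f t - ε • v‖ - (5/2) * (ε * ‖X (γ t) - v‖))]
      have e3 : (ε * ‖X (γ t) - v‖) ^ 2 ≤ ε ^ 2 * (m / 2) ^ 2 := by
        have h4 : ε * ‖X (γ t) - v‖ ≤ ε * (m / 2) := mul_le_mul_of_nonneg_left hhm hε.le
        nlinarith [mul_nonneg hε.le (norm_nonneg (X (γ t) - v))]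
      linarith
    have intuv : IntervalIntegrable (fun t => ‖f t - ε • v‖ ^ 2) volume 0 1 :=
      (((hfc.sub continuous_const).norm.pow 2)).intervalIntegrable 0 1
    have step1 : (∫ t in (0:ℝ)..1, (‖f t - ε • v‖ ^ 2 - (5/16) * ε ^ 2 * m ^ 2))
        ≤ ∫ t in (0:ℝ)..1, 5 * ‖f t - ε • X (γ t)‖ ^ 2 :=
      intervalIntegral.integral_mono_on (by norm_num)
        (intuv.sub intervalIntegrable_const) (int2.const_mul 5) ptwise
    rw [intervalIntegral.integral_sub intuv intervalIntegrable_const,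
      intervalIntegral.integral_const_mul, intervalIntegral.integral_const, smul_eq_mul,
      sub_zero, one_mul, intervalIntegral.integral_const_mul] at step1
    -- compute ∫ ‖f - εv‖²
    have hinner : (∫ t in (0:ℝ)..1, ⟪f t, v⟫) = 0 := by
      have hd : ∀ x ∈ Set.uIcc (0:ℝ) 1, HasDerivAt (fun t => (⟪γ t, v⟫ : ℝ)) ⟪f x, v⟫ x := by
        intro x _
        have hdx : HasDerivAt γ (f x) x := ((hγ.differentiable one_ne_zero) x).hasDerivAt
        simpa using hdx.inner ℝ (hasDerivAt_const x v)
      rw [intervalIntegral.integral_eq_sub_of_hasDerivAt hd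
        ((hfc.inner continuous_const).intervalIntegrable 0 1), hloop, sub_self]
    have intc : IntervalIntegrable (fun t => 2 * ε * ⟪f t, v⟫) volume 0 1 :=
      (continuous_const.mul (hfc.inner continuous_const)).intervalIntegrable 0 1
    have hIuv : (∫ t in (0:ℝ)..1, ‖f t - ε • v‖ ^ 2) = A + ε ^ 2 * ‖v‖ ^ 2 := by
      have expand : ∀ t : ℝ, ‖f t - ε • v‖ ^ 2
          = ‖f t‖ ^ 2 - 2 * ε * ⟪f t, v⟫ + ε ^ 2 * ‖v‖ ^ 2 := by
        intro t
        rw [norm_sub_sq_real, real_inner_smul_right, norm_smul, Real.norm_eq_abs,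
          abs_of_pos hε]
        ring
      simp only [expand]
      rw [intervalIntegral.integral_add ((int1.sub intc)) intervalIntegrable_const,
        intervalIntegral.integral_sub int1 intc,
        intervalIntegral.integral_const_mul, hinner, intervalIntegral.integral_const,
        smul_eq_mul, sub_zero, one_mul]
      ring
    rw [hIuv] at step1
    nlinarith [mul_nonneg (sq_nonneg ε)
      (sub_nonneg.mpr (mul_le_mul hvm hvm hm0.le (norm_nonneg v)))]
end

section
/- Crossing-loop estimate for Floer solutions (Lemma 4.4 in ℝ^{2n}): Fix an ω-compatible almost complex structure J, a function h with N := h⁻¹([0,1]) compact and ∇h ≠ 0 on N, and R > 0 as in the context. Let 0 ≤ c₋ < c₊ ≤ 1, ε > 0, δ ≥ 0, let H be a homotopy adapted to (h, ε, δ), and let u be a solution of the Floer equation with respect to (H, J). If for some s ∈ ℝ the loop t ↦ u(s,t) intersects both level sets h⁻¹(c₋) and h⁻¹(c₊), then ∫₀¹ |∂_s u(s,t)|_{g_J(u(s,t))} dt ≥ (c₊ − c₋)/‖dh‖_{g_J} − δ. In particular, if δ ≤ (c₊ − c₋)/(2‖dh‖_{g_J}), then ∫₀¹ |∂_s u(s,t)|_{g_J(u(s,t))}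 dt ≥ (c₊ − c₋)/(2‖dh‖_{g_J}). -/
open MeasureTheory intervalIntegral

noncomputable section

/-- `Esp n` is the Euclidean space `ℝ^{2n}` with its standard inner product. -/
abbrev Esp (n : ℕ) := EuclideanSpace ℝ (Fin (2 * n))

/-- The standard symplectic form `ω(v,w) = ⟨J₀ v, w⟩` associated to a linear
complex structure `J₀`. -/
def symplForm {n : ℕ} (J0 : Esp n →ₗᵢ[ℝ] Esp n) (v w : Esp n) : ℝ :=
  inner ℝ (J0 v) w

/-- The Hamiltonian vector field `X_H(x) = J₀ ∇H(x)` of a Hamiltonian `H`. -/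
def hamVF {n : ℕ} (J0 : Esp n →ₗᵢ[ℝ] Esp n) (H : Esp n → ℝ) (x : Esp n) : Esp n :=
  J0 (gradient H x)

/-- The norm `|v|_{g_J(x)} = √(ω(v, J(x)v))` associated to the metric
`g_J(x)(v,w) = ω(v, J(x)w)`. -/
def gNorm {n : ℕ} (J0 : Esp n →ₗᵢ[ℝ] Esp n) (J : Esp n → Esp n →L[ℝ] Esp n)
    (x v : Esp n) : ℝ :=
  Real.sqrt (symplForm J0 v (J x v))

/-- An `ω`-compatible almost complex structure on `ℝ^{2n}`: a smooth family
`J : E → End(E)` with `J(x)² = −id`, preserving `ω`, and such that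
`g_J(x)(v,w) = ω(v, J(x)w)` is positive definite. -/
structure OmegaCompatible {n : ℕ} (J0 : Esp n →ₗᵢ[ℝ] Esp n)
    (J : Esp n → Esp n →L[ℝ] Esp n) : Prop where
  smooth : ContDiff ℝ (⊤ : ℕ∞) J
  square : ∀ x v, J x (J x v) = -v
  invariant : ∀ x v w, symplForm J0 (J x v) (J x w) = symplForm J0 v w
  posdef : ∀ x v, v ≠ 0 → 0 < symplForm J0 v (J x v)

/-- Partial derivative of `u : ℝ × ℝ → ℝ^{2n}` in the `s` variable. -/
def partialS {n : ℕ} (u : ℝ → ℝ → Esp n) (s t : ℝ) : Esp n :=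
  deriv (fun s' => u s' t) s

/-- Partial derivative of `u : ℝ × ℝ → ℝ^{2n}` in the `t` variable. -/
def partialT {n : ℕ} (u : ℝ → ℝ → Esp n) (s t : ℝ) : Esp n :=
  deriv (fun t' => u s t') t

/-- A solution of the `s`-dependent Floer equation with respect to the homotopy
of Hamiltonians `H : E × ℝ × ℝ → ℝ` (arguments `(x, t, s)`) and almost complex
structure `J`: a smooth map `u : ℝ × ℝ → E`, 1-periodic in `t`, with
`∂_s u + J(u)(∂_t u − X_{H(·,t,s)}(u)) = 0`. -/
structure FloerSolution {n : ℕ} (J0 : Esp n →ₗᵢ[ℝ] Esp n)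
    (J : Esp n → Esp n →L[ℝ] Esp n) (H : Esp n → ℝ → ℝ → ℝ)
    (u : ℝ → ℝ → Esp n) : Prop where
  smooth : ContDiff ℝ (⊤ : ℕ∞) (fun p : ℝ × ℝ => u p.1 p.2)
  periodic : ∀ s t, u s (t + 1) = u s t
  floerEq : ∀ s t,
    partialS u s t
      + J (u s t) (partialT u s t - hamVF J0 (fun x => H x t s) (u s t)) = 0

/-- The energy `E(u) = ∫_ℝ ∫₀¹ |∂_s u|²_{g_J(u)} dt ds` of a Floer trajectory. -/
def energy {n : ℕ} (J0 : Esp n →ₗᵢ[ℝ] Esp n) (J : Esp n → Esp n →L[ℝ] Esp n)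
    (u : ℝ → ℝ → Esp n) : ℝ :=
  ∫ s : ℝ, ∫ t in (0 : ℝ)..1, (gNorm J0 J (u s t) (partialS u s t)) ^ 2

/-- The region `N = h⁻¹([0,1])`. -/
def tubN {n : ℕ} (h : Esp n → ℝ) : Set (Esp n) :=
  {x | h x ∈ Set.Icc (0 : ℝ) 1}

/-- A homotopy of Hamiltonians `H` (arguments `(x,t,s)`) is adapted to
`(h, ε, δ)` (with parameter `R`): it is smooth, 1-periodic in `t`, `∂_s H` is
supported in `|s| ≤ R`, and on `N = h⁻¹([0,1])` it has the form
`H(x,t,s) = ε h(x) + h'(x,t,s) + β(s,t)` where `h'` is smooth, 1-periodic in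
`t`, has `∂_s h'` supported in `|s| ≤ R`, and satisfies
`max{sup|∂_s h'|, sup |X_{h'}|_{g_J}} ≤ δ`. -/
structure AdaptedHomotopy {n : ℕ} (J0 : Esp n →ₗᵢ[ℝ] Esp n)
    (J : Esp n → Esp n →L[ℝ] Esp n) (h : Esp n → ℝ) (R ε δ : ℝ)
    (H : Esp n → ℝ → ℝ → ℝ) : Prop where
  smooth : ContDiff ℝ (⊤ : ℕ∞) (fun p : Esp n × ℝ × ℝ => H p.1 p.2.1 p.2.2)
  periodic : ∀ x t s, H x (t + 1) s = H x t s
  dsSupport : ∀ x t s, s ∉ Set.Icc (-R) R → deriv (fun s' => H x t s') s = 0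
  form : ∃ (h' : Esp n → ℝ → ℝ → ℝ) (β : ℝ → ℝ → ℝ),
    ContDiff ℝ (⊤ : ℕ∞) (fun p : Esp n × ℝ × ℝ => h' p.1 p.2.1 p.2.2) ∧
    (∀ x t s, h' x (t + 1) s = h' x t s) ∧
    (∀ x t s, s ∉ Set.Icc (-R) R → deriv (fun s' => h' x t s') s = 0) ∧
    (∀ x t s, |deriv (fun s' => h' x t s') s| ≤ δ) ∧
    (∀ x t s, gNorm J0 J x (hamVF J0 (fun y => h' y t s) x) ≤ δ) ∧
    (∀ x ∈ tubN h, ∀ t s, H x t s = ε * h x + h' x t s + β s t)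

/-- The norm `‖dh‖_{g_J} = sup_{x ∈ N} sup_{v ≠ 0} |dh_x(v)| / |v|_{g_J(x)}`. -/
def dhNorm {n : ℕ} (J0 : Esp n →ₗᵢ[ℝ] Esp n) (J : Esp n → Esp n →L[ℝ] Esp n)
    (h : Esp n → ℝ) : ℝ :=
  sSup {r : ℝ | ∃ x ∈ tubN h, ∃ v : Esp n, v ≠ 0 ∧
    r = |fderiv ℝ h x v| / gNorm J0 J x v}

namespace CrossAux

variable {n : ℕ} {J0 : Esp n →ₗᵢ[ℝ] Esp n} {J : Esp n → Esp n →L[ℝ] Esp n}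

lemma gNorm_nonneg (x v : Esp n) : 0 ≤ gNorm J0 J x v := Real.sqrt_nonneg _

lemma gNorm_pos (hJ : OmegaCompatible J0 J) (x : Esp n) {v : Esp n} (hv : v ≠ 0) :
    0 < gNorm J0 J x v := Real.sqrt_pos.2 (hJ.posdef x v hv)

lemma gNorm_smul (x : Esp n) (c : ℝ) (v : Esp n) :
    gNorm J0 J x (c • v) = |c| * gNorm J0 J x (v) := by
  unfold gNorm symplForm
  rw [_root_.map_smul, _root_.map_smul, inner_smul_left, inner_smul_right]
  rw [show (starRingEnd ℝ) c * (c * inner ℝ (J0 v) (J x v)) = c^2 * inner ℝ (J0 v) (J x v) by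
    simp [starRingEnd_apply]; ring]
  rw [Real.sqrt_mul (sq_nonneg c), Real.sqrt_sq_eq_abs]

lemma gNorm_J (hJ : OmegaCompatible J0 J) (x v : Esp n) :
    gNorm J0 J x (J x v) = gNorm J0 J x v := by
  unfold gNorm
  rw [hJ.invariant x v (J x v)]

lemma fderiv_apply_grad (f : Esp n → ℝ) (x v : Esp n) :
    fderiv ℝ f x v = inner ℝ (gradient f x) v := by
  rw [gradient, InnerProductSpace.toDual_symm_apply]

lemma inner_J0_self (hJ0 : ∀ v, J0 (J0 v) = -v) (w : Esp n) :
    (inner ℝ w (J0 w) : ℝ) = 0 := by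
  have h1 : (inner ℝ (J0 w) (J0 (J0 w)) : ℝ) = inner ℝ w (J0 w) := J0.inner_map_map w (J0 w)
  rw [hJ0 w, inner_neg_right] at h1
  have h2 : (inner ℝ (J0 w) w : ℝ) = inner ℝ w (J0 w) := real_inner_comm _ _
  linarith

end CrossAux

namespace CrossAux2
open CrossAux

variable {n : ℕ} {J0 : Esp n →ₗᵢ[ℝ] Esp n} {J : Esp n → Esp n →L[ℝ] Esp n} {h : Esp n → ℝ}

lemma gNorm_zero (x : Esp n) : gNorm J0 J x (0 : Esp n) = 0 := by
  unfold gNorm symplForm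
  rw [map_zero, inner_zero_left, Real.sqrt_zero]

lemma gNorm_cont (hJ : OmegaCompatible J0 J) :
    Continuous (fun p : Esp n × Esp n => gNorm J0 J p.1 p.2) := by
  unfold gNorm symplForm
  exact Real.continuous_sqrt.comp
    ((J0.continuous.comp continuous_snd).inner
      ((hJ.smooth.continuous.comp continuous_fst).clm_apply continuous_snd))

lemma exists_bound (hn : 1 ≤ n) (hJ : OmegaCompatible J0 J)
    (hhsm : ContDiff ℝ (⊤ : ℕ∞) h) (hNcpt : IsCompact (tubN h)) :
    ∃ C : ℝ, 0 ≤ C ∧ ∀ x ∈ tubN h, ∀ v : Esp n, |fderiv ℝ h x v| ≤ C * gNorm J0 J x v := by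
  by_cases hne : (tubN h).Nonempty
  swap
  · exact ⟨0, le_refl 0, fun x hx v => absurd ⟨x, hx⟩ hne⟩
  -- bound on fderiv norms
  have hcont : ContinuousOn (fun x => ‖fderiv ℝ h x‖) (tubN h) :=
    ((hhsm.continuous_fderiv (by simp)).norm).continuousOn
  obtain ⟨M₀, hM₀⟩ := hNcpt.exists_bound_of_continuousOn hcont
  set M := max M₀ 0 with hM
  have hMnn : 0 ≤ M := le_max_right _ _
  have hMb : ∀ x ∈ tubN h, ‖fderiv ℝ h x‖ ≤ M := by
    intro x hx
    calc ‖fderiv ℝ h x‖ ≤ ‖(fun x => ‖fderiv ℝ h x‖) x‖ := le_abs_self _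
    _ ≤ M₀ := hM₀ x hx
    _ ≤ M := le_max_left _ _
  -- min of gNorm on N × sphere
  have hsph : (Metric.sphere (0 : Esp n) 1).Nonempty := by
    refine ⟨EuclideanSpace.single ⟨0, by omega⟩ (1 : ℝ), ?_⟩
    simp [EuclideanSpace.norm_single]
  have hKne : ((tubN h) ×ˢ (Metric.sphere (0 : Esp n) 1)).Nonempty := hne.prod hsph
  have hKcpt : IsCompact ((tubN h) ×ˢ (Metric.sphere (0 : Esp n) 1)) :=
    hNcpt.prod (isCompact_sphere _ _)
  obtain ⟨⟨x₀, v₀⟩, hmem, hmin⟩ :=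
    hKcpt.exists_isMinOn hKne ((gNorm_cont hJ).continuousOn)
  set c := gNorm J0 J x₀ v₀ with hc
  have hv₀ : v₀ ≠ 0 := by
    intro h0
    have := hmem.2
    rw [h0] at this
    simp at this
  have hcpos : 0 < c := gNorm_pos hJ x₀ hv₀
  refine ⟨M / c, div_nonneg hMnn hcpos.le, fun x hx v => ?_⟩
  by_cases hv : v = 0
  · simp [hv, gNorm_zero]
  · have hnv : (0:ℝ) < ‖v‖ := norm_pos_iff.2 hv
    set w := ‖v‖⁻¹ • v with hw
    have hwn : ‖w‖ = 1 := by
      rw [hw, norm_smul, norm_inv, norm_norm, inv_mul_cancel₀ hnv.ne']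
    have hwsph : w ∈ Metric.sphere (0 : Esp n) 1 := by
      rw [Metric.mem_sphere, dist_zero_right]; exact hwn
    have hgw : c ≤ gNorm J0 J x w := by
      have := isMinOn_iff.1 hmin (x, w) (Set.mk_mem_prod hx hwsph)
      exact this
    have hvw : v = ‖v‖ • w := by
      rw [hw, smul_smul, mul_inv_cancel₀ hnv.ne', one_smul]
    have hgv : ‖v‖ * c ≤ gNorm J0 J x v := by
      calc ‖v‖ * c ≤ ‖v‖ * gNorm J0 J x w := by nlinarith
      _ = |‖v‖| * gNorm J0 J x w := by rw [abs_of_nonneg hnv.le]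
      _ = gNorm J0 J x (‖v‖ • w) := (gNorm_smul x _ w).symm
      _ = gNorm J0 J x v := by rw [← hvw]
    calc |fderiv ℝ h x v| ≤ ‖fderiv ℝ h x‖ * ‖v‖ := (fderiv ℝ h x).le_opNorm v
    _ ≤ M * ‖v‖ := by nlinarith [hMb x hx]
    _ = (M / c) * (‖v‖ * c) := by field_simp
    _ ≤ (M / c) * gNorm J0 J x v := by
        have : (0:ℝ) ≤ M / c := div_nonneg hMnn hcpos.le
        nlinarith

lemma dhNorm_bddAbove (hn : 1 ≤ n) (hJ : OmegaCompatible J0 J)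
    (hhsm : ContDiff ℝ (⊤ : ℕ∞) h) (hNcpt : IsCompact (tubN h)) :
    BddAbove {r : ℝ | ∃ x ∈ tubN h, ∃ v : Esp n, v ≠ 0 ∧
      r = |fderiv ℝ h x v| / gNorm J0 J x v} := by
  obtain ⟨C, hC0, hC⟩ := exists_bound hn hJ hhsm hNcpt
  refine ⟨C, fun r hr => ?_⟩
  obtain ⟨x, hx, v, hv, rfl⟩ := hr
  rw [div_le_iff₀ (gNorm_pos hJ x hv)]
  exact hC x hx v

lemma dh_le (hn : 1 ≤ n) (hJ : OmegaCompatible J0 J)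
    (hhsm : ContDiff ℝ (⊤ : ℕ∞) h) (hNcpt : IsCompact (tubN h))
    (hD0 : 0 ≤ dhNorm J0 J h) {x : Esp n} (hx : x ∈ tubN h) (v : Esp n) :
    |fderiv ℝ h x v| ≤ dhNorm J0 J h * gNorm J0 J x v := by
  by_cases hv : v = 0
  · simp [hv, gNorm_zero]
  · have hmem : |fderiv ℝ h x v| / gNorm J0 J x v ∈
        {r : ℝ | ∃ x ∈ tubN h, ∃ v : Esp n, v ≠ 0 ∧
          r = |fderiv ℝ h x v| / gNorm J0 J x v} := ⟨x, hx, v, hv, rfl⟩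
    have hle := le_csSup (dhNorm_bddAbove hn hJ hhsm hNcpt) hmem
    rw [div_le_iff₀ (gNorm_pos hJ x hv)] at hle
    exact hle

lemma dhNorm_pos (hn : 1 ≤ n) (hJ : OmegaCompatible J0 J)
    (hhsm : ContDiff ℝ (⊤ : ℕ∞) h) (hNcpt : IsCompact (tubN h))
    {x₀ : Esp n} (hx₀ : x₀ ∈ tubN h) (hg : gradient h x₀ ≠ 0) :
    0 < dhNorm J0 J h := by
  set v := gradient h x₀ with hv
  have hmem : |fderiv ℝ h x₀ v| / gNorm J0 J x₀ v ∈
      {r : ℝ | ∃ x ∈ tubN h, ∃ v : Esp n, v ≠ 0 ∧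
        r = |fderiv ℝ h x v| / gNorm J0 J x v} := ⟨x₀, hx₀, v, hg, rfl⟩
  have hle := le_csSup (dhNorm_bddAbove hn hJ hhsm hNcpt) hmem
  have hpos : 0 < |fderiv ℝ h x₀ v| / gNorm J0 J x₀ v := by
    apply div_pos _ (gNorm_pos hJ x₀ hg)
    rw [fderiv_apply_grad, ← hv, real_inner_self_eq_norm_sq]
    have : 0 < ‖v‖ := norm_pos_iff.2 hg
    positivity
  rw [dhNorm]
  exact hpos.trans_le hle

end CrossAux2

open CrossAux CrossAux2 in
set_option maxHeartbeats 2000000 in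
/-- **Crossing-loop estimate for Floer solutions** (Lemma 4.4 in `ℝ^{2n}`).
If at some `s` the loop `t ↦ u(s,t)` of a Floer solution for a homotopy adapted
to `(h, ε, δ)` intersects both level sets `h⁻¹(c₋)` and `h⁻¹(c₊)`, then
`∫₀¹ |∂_s u(s,t)|_{g_J} dt ≥ (c₊ − c₋)/‖dh‖_{g_J} − δ`; in particular, if
`δ ≤ (c₊ − c₋)/(2‖dh‖_{g_J})` then
`∫₀¹ |∂_s u(s,t)|_{g_J} dt ≥ (c₊ − c₋)/(2‖dh‖_{g_J})`. -/
theorem crossing_loop_estimate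
    {n : ℕ} (hn : 1 ≤ n)
    (J0 : Esp n →ₗᵢ[ℝ] Esp n) (hJ0 : ∀ v, J0 (J0 v) = -v)
    (J : Esp n → Esp n →L[ℝ] Esp n) (hJ : OmegaCompatible J0 J)
    (h : Esp n → ℝ) (hhsm : ContDiff ℝ (⊤ : ℕ∞) h)
    (hNcpt : IsCompact (tubN h))
    (hgrad : ∀ x ∈ tubN h, gradient h x ≠ 0)
    (R : ℝ) (hR : 0 < R)
    (cm cp : ℝ) (hcm : 0 ≤ cm) (hcc : cm < cp) (hcp : cp ≤ 1)
    (ε δ : ℝ) (hε : 0 < ε) (hδ : 0 ≤ δ)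
    (H : Esp n → ℝ → ℝ → ℝ) (hH : AdaptedHomotopy J0 J h R ε δ H)
    (u : ℝ → ℝ → Esp n) (hu : FloerSolution J0 J H u)
    (s : ℝ)
    (hitsm : ∃ t : ℝ, h (u s t) = cm) (hitsp : ∃ t : ℝ, h (u s t) = cp) :
    (cp - cm) / dhNorm J0 J h - δ
        ≤ ∫ t in (0 : ℝ)..1, gNorm J0 J (u s t) (partialS u s t)
      ∧ (δ ≤ (cp - cm) / (2 * dhNorm J0 J h) →
          (cp - cm) / (2 * dhNorm J0 J h)
            ≤ ∫ t in (0 : ℝ)..1, gNorm J0 J (u s t) (partialS u s t)) := by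
  classical
  obtain ⟨tm, htm⟩ := hitsm
  obtain ⟨tp0, htp0⟩ := hitsp
  set D := dhNorm J0 J h with hDdef
  -- positivity of D
  have hxtmN : u s tm ∈ tubN h := by
    constructor <;> simp only [htm] <;> linarith
  have hDpos : 0 < D := dhNorm_pos hn hJ hhsm hNcpt hxtmN (hgrad _ hxtmN)
  have hD0 : (0:ℝ) ≤ D := hDpos.le
  -- smoothness setup
  have hUsm : ContDiff ℝ (⊤ : ℕ∞) (fun p : ℝ × ℝ => u p.1 p.2) := hu.smooth
  have cs : ContDiff ℝ (⊤ : ℕ∞) (u s) := hUsm.comp (contDiff_const.prodMk contDiff_id)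
  set g : ℝ → ℝ := fun t => h (u s t) with hgdef
  have gcont : Continuous g := hhsm.continuous.comp cs.continuous
  have gper : Function.Periodic g 1 := fun t => by
    simp only [hgdef, hu.periodic s t]
  -- partial derivatives: continuity
  have hPSd : ∀ t : ℝ, HasDerivAt (fun s' => u s' t)
      (fderiv ℝ (fun p : ℝ × ℝ => u p.1 p.2) (s, t) (1, 0)) s := by
    intro t
    have h1 : HasFDerivAt (fun p : ℝ × ℝ => u p.1 p.2)
        (fderiv ℝ (fun p : ℝ × ℝ => u p.1 p.2) (s, t)) (s, t) :=
      (hUsm.differentiable (by simp) (s, t)).hasFDerivAt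
    have h2 : HasDerivAt (fun s' : ℝ => ((s' : ℝ), t)) ((1 : ℝ), (0 : ℝ)) s := by
      simpa using ((hasDerivAt_id s).prodMk (hasDerivAt_const s t))
    exact h1.comp_hasDerivAt s h2
  have hPSeq : ∀ t : ℝ, partialS u s t
      = fderiv ℝ (fun p : ℝ × ℝ => u p.1 p.2) (s, t) (1, 0) := fun t => (hPSd t).deriv
  have contPS : Continuous (fun t => partialS u s t) := by
    have : Continuous (fun t : ℝ => fderiv ℝ (fun p : ℝ × ℝ => u p.1 p.2) (s, t) (1, 0)) := by
      exact ((hUsm.continuous_fderiv (by simp)).comp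
        (continuous_const.prodMk continuous_id)).clm_apply continuous_const
    exact this.congr (fun t => (hPSeq t).symm)
  have contPT : Continuous (fun t => partialT u s t) :=
    cs.continuous_deriv (by simp)
  set φ : ℝ → ℝ := fun t => gNorm J0 J (u s t) (partialS u s t) with hφdef
  have contφ : Continuous φ := by
    have h1 : Continuous fun t : ℝ => (u s t, partialS u s t) :=
      cs.continuous.prodMk contPS
    have h2 := (gNorm_cont (J0 := J0) (J := J) hJ).comp h1
    exact h2
  have φnn : ∀ t, 0 ≤ φ t := fun t => gNorm_nonneg _ _
  have psper : ∀ t, partialS u s (t + 1) = partialS u s t := by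
    intro t
    unfold partialS
    congr 1
    funext s'
    exact hu.periodic s' t
  have φper : Function.Periodic φ 1 := fun t => by
    simp only [hφdef, psper t, hu.periodic s t]
  -- derivative of g
  have hgd : ∀ t, HasDerivAt g (fderiv ℝ h (u s t) (partialT u s t)) t := by
    intro t
    have h1 : HasDerivAt (u s) (partialT u s t) t :=
      (cs.differentiable (by simp) t).hasDerivAt
    exact ((hhsm.differentiable (by simp) (u s t)).hasFDerivAt).comp_hasDerivAt t h1
  have contg' : Continuous (fun t => fderiv ℝ h (u s t) (partialT u s t)) :=
    ((hhsm.continuous_fderiv (by simp)).comp cs.continuous).clm_apply contPT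
  -- normalize tp into [tm, tm+1)
  set tp : ℝ := tp0 - (⌊tp0 - tm⌋ : ℤ) with htpdef
  have htp : g tp = cp := by
    have := gper.sub_int_mul_eq (x := tp0) ⌊tp0 - tm⌋
    simp only [mul_one] at this
    rw [htpdef]
    rw [this]
    exact htp0
  have hfr : tp - tm = Int.fract (tp0 - tm) := by
    rw [Int.fract, htpdef]; ring
  have htm_le_tp : tm ≤ tp := by
    have := Int.fract_nonneg (tp0 - tm); linarith
  have htp_lt : tp < tm + 1 := by
    have := Int.fract_lt_one (tp0 - tm); linarith
  have hgtm : g tm = cm := htm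
  have htm_lt_tp : tm < tp := by
    rcases lt_or_eq_of_le htm_le_tp with h1 | h1
    · exact h1
    · exfalso; rw [← h1, hgtm] at htp; linarith
  -- construct b
  set Sp : Set ℝ := Set.Icc tm tp ∩ {t | g t = cp} with hSpdef
  have hSpcl : IsClosed Sp := isClosed_Icc.inter (isClosed_eq gcont continuous_const)
  have hSpne : Sp.Nonempty := ⟨tp, ⟨htm_le_tp, le_refl tp⟩, htp⟩
  have hSpbdd : BddBelow Sp := ⟨tm, fun t ht => ht.1.1⟩
  set b : ℝ := sInf Sp with hbdef
  have hbmem : b ∈ Sp := hSpcl.csInf_mem hSpne hSpbdd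
  have hgb : g b = cp := hbmem.2
  have htm_b : tm ≤ b := hbmem.1.1
  have hb_tp : b ≤ tp := hbmem.1.2
  have hnotp : ∀ t, tm ≤ t → t < b → g t ≠ cp := by
    intro t h1 h2 hc
    have : b ≤ t := csInf_le hSpbdd ⟨⟨h1, h2.le.trans hb_tp⟩, hc⟩
    linarith
  -- construct a
  set Sm : Set ℝ := Set.Icc tm b ∩ {t | g t = cm} with hSmdef
  have hSmcl : IsClosed Sm := isClosed_Icc.inter (isClosed_eq gcont continuous_const)
  have hSmne : Sm.Nonempty := ⟨tm, ⟨le_refl tm, htm_b⟩, hgtm⟩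
  have hSmbdd : BddAbove Sm := ⟨b, fun t ht => ht.1.2⟩
  set a : ℝ := sSup Sm with hadef
  have hamem : a ∈ Sm := hSmcl.csSup_mem hSmne hSmbdd
  have hga : g a = cm := hamem.2
  have ha_ge : tm ≤ a := hamem.1.1
  have ha_le : a ≤ b := hamem.1.2
  have hnotm : ∀ t, a < t → t ≤ b → g t ≠ cm := by
    intro t h1 h2 hc
    have : t ≤ a := le_csSup hSmbdd ⟨⟨ha_ge.trans h1.le, h2⟩, hc⟩
    linarith
  have hab : a < b := by
    rcases lt_or_eq_of_le ha_le with h1 | h1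
    · exact h1
    · exfalso; rw [h1, hgb] at hga; linarith
  have hb_le : b ≤ a + 1 := by linarith
  -- values in the middle
  have hmid : ∀ t ∈ Set.Ioo a b, cm < g t ∧ g t < cp := by
    intro t ht
    constructor
    · by_contra hle
      push_neg at hle
      have hsub : Set.Icc (g t) (g b) ⊆ g '' Set.Icc t b :=
        intermediate_value_Icc ht.2.le gcont.continuousOn
      obtain ⟨t', ht', hgt'⟩ := hsub ⟨hle, by rw [hgb]; linarith⟩
      have h1 : a < t' := lt_of_lt_of_le ht.1 ht'.1
      exact absurd hgt' (hnotm t' h1 ht'.2)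
    · by_contra hle
      push_neg at hle
      have hsub : Set.Icc (g a) (g t) ⊆ g '' Set.Icc a t :=
        intermediate_value_Icc ht.1.le gcont.continuousOn
      obtain ⟨t', ht', hgt'⟩ := hsub ⟨by rw [hga]; linarith, hle⟩
      have h1 : t' < b := lt_of_le_of_lt ht'.2 ht.2
      exact absurd hgt' (hnotp t' (ha_ge.trans ht'.1) h1)
  -- Hamiltonian decomposition data
  obtain ⟨h', β, h'sm, h'per, h'supp, h'ds, h'X, hform⟩ := hH.form
  -- pointwise derivative bound on the open interval
  have hkey : ∀ t ∈ Set.Ioo a b,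
      fderiv ℝ h (u s t) (partialT u s t) ≤ D * δ + D * φ t := by
    intro t ht
    have hgt := hmid t ht
    have hx01 : h (u s t) ∈ Set.Ioo (0:ℝ) 1 :=
      ⟨lt_of_le_of_lt hcm hgt.1, lt_of_lt_of_le hgt.2 hcp⟩
    have hxN : u s t ∈ tubN h := ⟨hx01.1.le, hx01.2.le⟩
    have hUopen : IsOpen (h ⁻¹' Set.Ioo (0:ℝ) 1) := isOpen_Ioo.preimage hhsm.continuous
    have heq : (fun y => H y t s) =ᶠ[nhds (u s t)]
        (fun y => ε * h y + h' y t s + β s t) := by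
      filter_upwards [hUopen.mem_nhds hx01] with y hy
      exact hform y ⟨hy.1.le, hy.2.le⟩ t s
    have hfd : fderiv ℝ (fun y => H y t s) (u s t)
        = fderiv ℝ (fun y => ε * h y + h' y t s + β s t) (u s t) := heq.fderiv_eq
    have hdh : DifferentiableAt ℝ h (u s t) :=
      hhsm.differentiable (by simp) (u s t)
    have h'c : ContDiff ℝ (⊤ : ℕ∞) (fun y => h' y t s) := by
      have hmap : ContDiff ℝ (⊤ : ℕ∞) (fun y : Esp n => (y, ((t, s) : ℝ × ℝ))) :=
        contDiff_id.prodMk contDiff_const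
      exact h'sm.comp hmap
    have hdh' : DifferentiableAt ℝ (fun y => h' y t s) (u s t) :=
      h'c.differentiable (by simp) (u s t)
    have hfd2 : fderiv ℝ (fun y => ε * h y + h' y t s + β s t) (u s t)
        = ε • fderiv ℝ h (u s t) + fderiv ℝ (fun y => h' y t s) (u s t) := by
      rw [fderiv_add_const, fderiv_fun_add (hdh.const_mul ε) hdh', fderiv_const_mul hdh]
    have hgradeq : gradient (fun y => H y t s) (u s t)
        = ε • gradient h (u s t) + gradient (fun y => h' y t s) (u s t) := by
      unfold gradient
      rw [hfd, hfd2, _root_.map_add, _root_.map_smul]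
    -- Floer equation rearrangement
    have hfl := hu.floerEq s t
    have h2 := congrArg (J (u s t)) hfl
    rw [map_add, map_zero, hJ.square (u s t)
      (partialT u s t - hamVF J0 (fun y => H y t s) (u s t))] at h2
    have h3 : J (u s t) (partialS u s t)
        = partialT u s t - hamVF J0 (fun y => H y t s) (u s t) := by
      rwa [add_neg_eq_zero] at h2
    have hPT : partialT u s t
        = hamVF J0 (fun y => H y t s) (u s t) + J (u s t) (partialS u s t) := by
      rw [h3]; abel
    have hXH : hamVF J0 (fun y => H y t s) (u s t)
        = ε • (J0 (gradient h (u s t)))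
          + J0 (gradient (fun y => h' y t s) (u s t)) := by
      unfold hamVF
      rw [hgradeq, _root_.map_add, _root_.map_smul]
    have hL : fderiv ℝ h (u s t) (partialT u s t)
        = fderiv ℝ h (u s t) (hamVF J0 (fun y => h' y t s) (u s t))
          + fderiv ℝ h (u s t) (J (u s t) (partialS u s t)) := by
      rw [hPT, map_add, hXH, map_add, _root_.map_smul, smul_eq_mul,
        fderiv_apply_grad h (u s t) (J0 (gradient h (u s t))), inner_J0_self hJ0]
      unfold hamVF
      ring
    have b1 : |fderiv ℝ h (u s t) (hamVF J0 (fun y => h' y t s) (u s t))| ≤ D * δ := by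
      calc |fderiv ℝ h (u s t) (hamVF J0 (fun y => h' y t s) (u s t))|
          ≤ D * gNorm J0 J (u s t) (hamVF J0 (fun y => h' y t s) (u s t)) :=
            dh_le hn hJ hhsm hNcpt hD0 hxN _
        _ ≤ D * δ := by
            have hnn : (0:ℝ) ≤ gNorm J0 J (u s t) (hamVF J0 (fun y => h' y t s) (u s t)) :=
              gNorm_nonneg _ _
            nlinarith [h'X (u s t) t s]
    have b2 : |fderiv ℝ h (u s t) (J (u s t) (partialS u s t))| ≤ D * φ t := by
      calc |fderiv ℝ h (u s t) (J (u s t) (partialS u s t))|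
          ≤ D * gNorm J0 J (u s t) (J (u s t) (partialS u s t)) :=
            dh_le hn hJ hhsm hNcpt hD0 hxN _
        _ = D * φ t := by rw [gNorm_J hJ]
    calc fderiv ℝ h (u s t) (partialT u s t)
        = fderiv ℝ h (u s t) (hamVF J0 (fun y => h' y t s) (u s t))
          + fderiv ℝ h (u s t) (J (u s t) (partialS u s t)) := hL
      _ ≤ D * δ + D * φ t := by
          have := abs_le.1 b1
          have := abs_le.1 b2
          linarith [(abs_le.1 b1).2, (abs_le.1 b2).2, le_abs_self
            (fderiv ℝ h (u s t) (hamVF J0 (fun y => h' y t s) (u s t)))]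
  -- extend to the closed interval by continuity
  have hkey2 : ∀ t ∈ Set.Icc a b,
      fderiv ℝ h (u s t) (partialT u s t) ≤ D * δ + D * φ t := by
    intro t ht
    have hcl : closure (Set.Ioo a b) = Set.Icc a b := closure_Ioo hab.ne
    rw [← hcl] at ht
    exact le_on_closure hkey contg'.continuousOn
      ((continuous_const.add (continuous_const.mul contφ)).continuousOn) ht
  -- integrate
  have hint1 : ∫ t in a..b, fderiv ℝ h (u s t) (partialT u s t) = g b - g a :=
    intervalIntegral.integral_eq_sub_of_hasDerivAt
      (fun t _ => hgd t) (contg'.intervalIntegrable a b)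
  have hintmono : ∫ t in a..b, fderiv ℝ h (u s t) (partialT u s t)
      ≤ ∫ t in a..b, (D * δ + D * φ t) := by
    apply intervalIntegral.integral_mono_on hab.le (contg'.intervalIntegrable a b)
      ((continuous_const.add (continuous_const.mul contφ)).intervalIntegrable a b) hkey2
  have hrhs : ∫ t in a..b, (D * δ + D * φ t)
      = D * δ * (b - a) + D * ∫ t in a..b, φ t := by
    rw [intervalIntegral.integral_add (f := fun _ => D * δ) (g := fun t => D * φ t)
      (intervalIntegrable_const)
      ((continuous_const.mul contφ).intervalIntegrable a b),
      intervalIntegral.integral_const, intervalIntegral.integral_const_mul]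
    simp only [smul_eq_mul]
    ring
  have hmono2 : ∫ t in a..b, φ t ≤ ∫ t in a..(a+1), φ t := by
    apply intervalIntegral.integral_mono_interval (le_refl a) hab.le hb_le
      (ae_of_all _ φnn) (contφ.intervalIntegrable a (a+1))
  have hperint : ∫ t in a..(a+1), φ t = ∫ t in (0:ℝ)..1, φ t := by
    have := φper.intervalIntegral_add_eq a 0
    simpa using this
  set I : ℝ := ∫ t in (0:ℝ)..1, φ t with hIdef
  have hInn : 0 ≤ I := intervalIntegral.integral_nonneg (by norm_num) (fun t _ => φnn t)
  have hiab : 0 ≤ ∫ t in a..b, φ t :=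
    intervalIntegral.integral_nonneg hab.le (fun t _ => φnn t)
  have hmain : cp - cm ≤ D * δ + D * I := by
    have e1 : cp - cm = ∫ t in a..b, fderiv ℝ h (u s t) (partialT u s t) := by
      rw [hint1, hgb, hga]
    have e2 : ∫ t in a..b, φ t ≤ I := hmono2.trans (le_of_eq hperint)
    nlinarith [hintmono, hrhs, e2, hiab, e1,
      mul_le_mul_of_nonneg_left e2 hD0,
      mul_le_mul_of_nonneg_left (show b - a ≤ 1 by linarith) (mul_nonneg hD0 hδ)]
  have part1 : (cp - cm) / D - δ ≤ I := by
    have h1 : (cp - cm) / D ≤ I + δ := by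
      rw [div_le_iff₀ hDpos]
      nlinarith
    linarith
  constructor
  · exact part1
  · intro h2
    have e : (cp - cm) / D = 2 * ((cp - cm) / (2 * D)) := by
      field_simp
    have h3 : δ ≤ (cp - cm) / (2 * D) := h2
    have h4 : (cp - cm) / D - δ ≤ I := part1
    rw [e] at h4
    linarith

end
end

section
/- Spectral killers imply the max-inequality (Claim 3.1, abstract form): Let X be a topological space, (A, *) a semigroup, val : A → ℝ a function, and c : (X → ℝ) → A → ℝ a function satisfying: (stability) for all F, G : X → ℝ, every a ∈ A and every t ∈ ℝ, if F(x) − G(x) ≤ t for all x ∈ X, then c(F)(a) ≤ c(G)(a) + t; and (subadditivity for disjointly supported functions) for all F, G : X → ℝ whose supports are disjoint and all a, b ∈ A, c(F + G)(a * b) ≤ c(F)(a) + c(G)(b). Let L ≥ 1, let F₁, …, F_L and K₁, …, K_L be functions X → ℝ, let V̂₁, …, V̂_L ⊆ X be pairwise disjoint sets with the supports of F_i and of K_i contained in V̂_i for each i, and let a₁, …, a_L ∈ A. Assume that for each i: c(F_i + K_i)(a_i) = val(a_i), the function K_i is bounded, and sup_{x∈X} |K_i(x)| = c(F_i)(a_i)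 − val(a_i). Then c(F₁ + ⋯ + F_L)(a₁ * ⋯ * a_L) ≤ (Σ_{i=1}^L val(a_i)) + max_{1 ≤ i ≤ L} ( c(F_i)(a_i) − val(a_i) ). -/
noncomputable section

/-- The ordered product `a 0 * a 1 * ⋯ * a L` of a nonempty finite family of
elements of a semigroup. -/
def finOrderedProd {A : Type*} [Semigroup A] : (L : ℕ) → (Fin (L + 1) → A) → A
  | 0, a => a 0
  | L + 1, a => finOrderedProd L (fun i => a i.castSucc) * a (Fin.last (L + 1))

lemma tsupport_finsum_subset {X : Type*} [TopologicalSpace X] {n : ℕ}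
    (g : Fin n → X → ℝ) :
    tsupport (∑ i, g i) ⊆ ⋃ i, tsupport (g i) := by
  apply closure_minimal
  · intro x hx
    by_contra hc
    simp only [Set.mem_iUnion, not_exists] at hc
    have hzero : ∀ i, g i x = 0 := fun i => by
      by_contra h
      exact hc i (subset_closure h)
    apply hx
    simp [Finset.sum_apply, hzero]
  · exact isClosed_iUnion_of_finite fun i => isClosed_closure

lemma iterated_subadd {X : Type*} [TopologicalSpace X] {A : Type*} [Semigroup A]
    (c : (X → ℝ) → A → ℝ)
    (hsub : ∀ F G : X → ℝ, Disjoint (tsupport F) (tsupport G) →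
      ∀ a b : A, c (F + G) (a * b) ≤ c F a + c G b) :
    ∀ (L : ℕ) (G : Fin (L + 1) → X → ℝ) (V : Fin (L + 1) → Set X),
      Pairwise (Function.onFun Disjoint V) → (∀ i, tsupport (G i) ⊆ V i) →
      ∀ a : Fin (L + 1) → A,
        c (∑ i, G i) (finOrderedProd L a) ≤ ∑ i, c (G i) (a i) := by
  intro L
  induction L with
  | zero =>
    intro G V hV hGV a
    simp [finOrderedProd, Fin.sum_univ_one]
  | succ L ih =>
    intro G V hV hGV a
    rw [Fin.sum_univ_castSucc (f := G), Fin.sum_univ_castSucc (f := fun i => c (G i) (a i))]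
    show c (_ + _) (finOrderedProd (L + 1) a) ≤ _
    have hdisj : Disjoint (tsupport (∑ i : Fin (L + 1), G i.castSucc))
        (tsupport (G (Fin.last (L + 1)))) := by
      refine Set.disjoint_left.mpr fun x hx hx' => ?_
      obtain ⟨_, ⟨i, rfl⟩, hxi⟩ := tsupport_finsum_subset (fun i : Fin (L + 1) => G i.castSucc) hx
      have := hV (show (i.castSucc : Fin (L + 2)) ≠ Fin.last (L + 1) from
        (Fin.castSucc_lt_last i).ne)
      exact Set.disjoint_left.mp this (hGV _ hxi) (hGV _ hx')
    have h1 := hsub (∑ i : Fin (L + 1), G i.castSucc) (G (Fin.last (L + 1))) hdisj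
      (finOrderedProd L (fun i => a i.castSucc)) (a (Fin.last (L + 1)))
    have h2 := ih (fun i => G i.castSucc) (fun i => V i.castSucc)
      (fun i j hij => hV (by simpa using (Fin.castSucc_injective _).ne hij))
      (fun i => hGV _) (fun i => a i.castSucc)
    exact h1.trans (add_le_add h2 le_rfl)

/-- **Spectral killers imply the max-inequality** (Claim 3.1, abstract form).
Let `c` be a functional satisfying stability and subadditivity for disjointly
supported functions. If for each `i` there is a bounded function `K i`
supported in `V̂ i` with `sup |K i| = c (F i) (a i) − val (a i)` and
`c (F i + K i) (a i) = val (a i)`, where the `V̂ i` are pairwise disjoint and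
contain the supports of `F i` and `K i`, then
`c (∑ F i) (a 0 * ⋯ * a L) ≤ ∑ val (a i) + max_i (c (F i) (a i) − val (a i))`. -/
theorem spectral_killers_imply_max_inequality
    {X : Type*} [TopologicalSpace X] {A : Type*} [Semigroup A]
    (val : A → ℝ) (c : (X → ℝ) → A → ℝ)
    (hstab : ∀ F G : X → ℝ, ∀ a : A, ∀ t : ℝ,
      (∀ x, F x - G x ≤ t) → c F a ≤ c G a + t)
    (hsub : ∀ F G : X → ℝ, Disjoint (tsupport F) (tsupport G) →
      ∀ a b : A, c (F + G) (a * b) ≤ c F a + c G b)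
    (L : ℕ)
    (F K : Fin (L + 1) → X → ℝ) (V : Fin (L + 1) → Set X)
    (hV : Pairwise (Function.onFun Disjoint V))
    (hFV : ∀ i, tsupport (F i) ⊆ V i)
    (hKV : ∀ i, tsupport (K i) ⊆ V i)
    (a : Fin (L + 1) → A)
    (hkill : ∀ i, c (F i + K i) (a i) = val (a i))
    (hbdd : ∀ i, BddAbove (Set.range fun x => |K i x|))
    (hnorm : ∀ i, (⨆ x, |K i x|) = c (F i) (a i) - val (a i)) :
    c (∑ i, F i) (finOrderedProd L a)
      ≤ (∑ i, val (a i))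
        + Finset.univ.sup' Finset.univ_nonempty
            (fun i => c (F i) (a i) - val (a i)) := by
  set M := Finset.univ.sup' Finset.univ_nonempty
      (fun i : Fin (L + 1) => c (F i) (a i) - val (a i)) with hM
  have hMi : ∀ i, c (F i) (a i) - val (a i) ≤ M := fun i =>
    Finset.le_sup' (fun i : Fin (L + 1) => c (F i) (a i) - val (a i)) (Finset.mem_univ i)
  -- Step 1: stability
  have step1 : c (∑ i, F i) (finOrderedProd L a)
      ≤ c (∑ i, (F i + K i)) (finOrderedProd L a) + M := by
    apply hstab
    intro x
    have hpt : (∑ i, F i) x - (∑ i, (F i + K i)) x = -∑ i, K i x := by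
      simp [Finset.sum_apply, Finset.sum_add_distrib]
    rw [hpt]
    by_cases hex : ∃ j, K j x ≠ 0
    · obtain ⟨j, hj⟩ := hex
      have hsum : ∑ i, K i x = K j x := by
        rw [Finset.sum_eq_single j]
        · intro i _ hij
          by_contra h
          have hxi : x ∈ V i := hKV i (subset_closure h)
          have hxj : x ∈ V j := hKV j (subset_closure hj)
          exact Set.disjoint_left.mp (hV hij) hxi hxj
        · intro h; exact absurd (Finset.mem_univ j) h
      rw [hsum]
      calc -K j x ≤ |K j x| := neg_le_abs _
        _ ≤ ⨆ x, |K j x| := le_ciSup (hbdd j) x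
        _ = c (F j) (a j) - val (a j) := hnorm j
        _ ≤ M := hMi j
    · push_neg at hex
      simp only [hex, Finset.sum_const_zero, neg_zero]
      calc (0 : ℝ) ≤ |K 0 x| := abs_nonneg _
        _ ≤ ⨆ x, |K 0 x| := le_ciSup (hbdd 0) x
        _ = c (F 0) (a 0) - val (a 0) := hnorm 0
        _ ≤ M := hMi 0
  -- Step 2: iterated subadditivity
  have hGV : ∀ i, tsupport (F i + K i) ⊆ V i := by
    intro i
    have : tsupport (F i + K i) ⊆ tsupport (F i) ∪ tsupport (K i) := by
      refine (closure_mono (Function.support_add _ _)).trans ?_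
      rw [closure_union]
      exact subset_rfl

    exact this.trans (Set.union_subset (hFV i) (hKV i))
  have step2 : c (∑ i, (F i + K i)) (finOrderedProd L a) ≤ ∑ i, val (a i) := by
    calc c (∑ i, (F i + K i)) (finOrderedProd L a)
        ≤ ∑ i, c (F i + K i) (a i) := iterated_subadd c hsub L _ V hV hGV a
      _ = ∑ i, val (a i) := by simp [hkill]
  linarith

end
end
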